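/- For every integer k ≥ 2 there exist a constant C > 0 and a natural number N such that for all n ≥ N and every connected simple graph G with exactly k edges, f(n, G) ≤ (2^n / (2(k−1))) · (1 + C/√n); that is, 𝒫(n) can be partitioned into at most (2^n / (2(k−1))) · (1 + C/√n) parts each of which is G-free. -/

import Mathlib

/-- A family `F` of subsets of `[n]` contains a Berge-`G` if there exist an injective
map `φ` from the vertices of `G` to `[n]` and an injective map `g` from the edges of `G`
to members of `F` such that for every edge `uv` of `G`, `{φ u, φ v} ⊆ g (uv)`. -/
def ContainsBergeOf {V : Type} (G : SimpleGraph V) {n : ℕ}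
    (F : Set (Finset (Fin n))) : Prop :=
  ∃ (φ : V → Fin n) (g : G.edgeSet → Finset (Fin n)),
    Function.Injective φ ∧ Function.Injective g ∧
    (∀ e : G.edgeSet, g e ∈ F) ∧
    (∀ (e : G.edgeSet) (v : V), v ∈ (e : Sym2 V) → φ v ∈ g e)

/-- A family of subsets of `[n]` is `G`-free if it contains no Berge-`G`. -/
def GFree {V : Type} (G : SimpleGraph V) {n : ℕ} (F : Set (Finset (Fin n))) : Prop :=
  ¬ ContainsBergeOf G F


/-!
Write `n = m + 1` and `r = k - 1`. A family covered by two families `C`, `D` of at most `r` sets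
each, every member of `C` disjoint from every member of `D`, is `G`-free: the `k` distinct hosts
cannot all lie in `C` or all in `D`, so by connectivity two edges at a common vertex `v` have
hosts in `C` and in `D`, and both hosts contain the image of `v`.

A lower set `B ⊆ [m]` and an upper set `{n} ∪ ([m] \ B')` are disjoint whenever `B ⊆ B'`. Along
each chain of a symmetric chain decomposition of `𝒫([m])` we therefore pair `r` consecutive lower
sets with `r` upper sets taken further up the chain. This uses about `2 ^ m / r` blocks in total,
plus at most `r` per chain, and there are `C(m, ⌊m / 2⌋) ≤ 2 ^ m / √(m + 1)` chains.
-/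

open Finset

theorem SimpleGraph.Connected.exists_adjacent_edges_of_exists_not {V : Type*} {G : SimpleGraph V}
    (hG : G.Connected) (p : G.edgeSet → Prop) (h₁ : ∃ e, p e) (h₂ : ∃ e, ¬ p e) :
    ∃ (v : V) (e₁ e₂ : G.edgeSet), v ∈ (e₁ : Sym2 V) ∧ v ∈ (e₂ : Sym2 V) ∧ p e₁ ∧ ¬ p e₂ := by
  obtain ⟨e₁, he₁⟩ := h₁
  obtain ⟨e₂, he₂⟩ := h₂
  obtain ⟨u, hu⟩ : ∃ u, u ∈ (e₁ : Sym2 V) := ⟨_, Sym2.out_fst_mem _⟩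
  obtain ⟨w, hw⟩ : ∃ w, w ∈ (e₂ : Sym2 V) := ⟨_, Sym2.out_fst_mem _⟩
  suffices ∀ {u w : V} (_ : G.Walk u w), (∃ e : G.edgeSet, u ∈ (e : Sym2 V) ∧ p e) →
      (∃ e : G.edgeSet, w ∈ (e : Sym2 V) ∧ ¬ p e) →
      ∃ (v : V) (e₁ e₂ : G.edgeSet), v ∈ (e₁ : Sym2 V) ∧ v ∈ (e₂ : Sym2 V) ∧ p e₁ ∧ ¬ p e₂ from
    this (hG.preconnected u w).some ⟨e₁, hu, he₁⟩ ⟨e₂, hw, he₂⟩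
  intro u w walk
  induction walk with
  | nil => exact fun ⟨e₁, hu₁, h₁⟩ ⟨e₂, hu₂, h₂⟩ => ⟨_, e₁, e₂, hu₁, hu₂, h₁, h₂⟩
  | @cons u b w hub _ ih =>
    rintro ⟨e, hue, he⟩ hw
    by_cases hf : p ⟨s(u, b), hub⟩
    · exact ih ⟨_, Sym2.mem_mk_right u b, hf⟩ hw
    · exact ⟨u, e, _, hue, Sym2.mem_mk_left u b, he, hf⟩

def CrossDisjoint {α : Type*} (C D : Finset (Finset α)) : Prop :=
  ∀ S ∈ C, ∀ T ∈ D, Disjoint S T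

theorem gFree_of_subset_union {V : Type} {G : SimpleGraph V} (hG : G.Connected) {n : ℕ}
    {F : Set (Finset (Fin n))} {C D : Finset (Finset (Fin n))} (hF : F ⊆ ↑C ∪ ↑D)
    (hC : #C < G.edgeSet.ncard) (hD : #D < G.edgeSet.ncard) (hCD : CrossDisjoint C D) :
    GFree G F := by
  rintro ⟨φ, g, -, hg, hgF, hφ⟩
  have host_not_mem : ∀ E : Finset (Finset (Fin n)), #E < G.edgeSet.ncard → ∃ e, g e ∉ E := by
    intro E hE
    by_contra! hall
    have := Nat.card_le_card_of_injective (fun e => (⟨g e, hall e⟩ : E))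
      fun e₁ e₂ h => hg (congrArg Subtype.val h)
    rw [Nat.card_coe_set_eq, Nat.card_eq_fintype_card, Fintype.card_coe] at this
    omega
  obtain ⟨v, e₁, e₂, hv₁, hv₂, he₁, he₂⟩ :=
    hG.exists_adjacent_edges_of_exists_not (fun e => g e ∈ C)
      ((host_not_mem D hD).imp fun e he => (hF (hgF e)).resolve_right he) (host_not_mem C hC)
  have he₂D : g e₂ ∈ D := (hF (hgF e₂)).resolve_left he₂
  exact Finset.disjoint_left.1 (hCD _ he₁ _ he₂D) (hφ e₁ v hv₁) (hφ e₂ v hv₂)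

section SymmetricChains

variable {α : Type*}

/-- A saturated chain of subsets of `s` whose sizes run from `h` to `#s - h`. -/
def IsSymmetricChain (s : Finset α) (c : List (Finset α)) : Prop :=
  c ≠ [] ∧ (∀ A ∈ c, A ⊆ s) ∧ c.IsChain (· ⊆ ·) ∧
    ∃ h, 2 * h + c.length = #s + 1 ∧ c.map card = List.range' h c.length

theorem IsSymmetricChain.exists_card_eq_half {s : Finset α} {c : List (Finset α)}
    (hc : IsSymmetricChain s c) : ∃ A ∈ c, #A = #s / 2 := by
  obtain ⟨hne, -, -, h, hlen, hcard⟩ := hc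
  have : #s / 2 ∈ c.map card := by
    rw [hcard, List.mem_range'_1]
    have := List.length_pos_iff.2 hne
    omega
  simpa using this

variable [DecidableEq α]

/-- de Bruijn's step: the chain `A₀ ⊆ ⋯ ⊆ Aₗ` in `𝒫(s)` gives the two chains
`A₀ ⊆ ⋯ ⊆ Aₗ ⊆ Aₗ ∪ {a}` and `A₀ ∪ {a} ⊆ ⋯ ⊆ Aₗ₋₁ ∪ {a}` in `𝒫(s ∪ {a})`. -/
def splitChain (a : α) (c : List (Finset α)) : List (List (Finset α)) :=
  [c ++ c.getLast?.toList.map (insert a), c.dropLast.map (insert a)].filter (· ≠ [])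

theorem flatten_splitChain_perm (a : α) (c : List (Finset α)) :
    (splitChain a c).flatten.Perm (c ++ c.map (insert a)) := by
  rcases eq_or_ne c [] with rfl | hc
  · simp [splitChain]
  have : c.map (insert a) = c.dropLast.map (insert a) ++ [insert a (c.getLast hc)] := by
    conv_lhs => rw [← List.dropLast_append_getLast hc]
    simp
  simp only [splitChain, List.flatten_filter_ne_nil, List.flatten_cons, List.flatten_nil,
    List.append_nil, List.getLast?_eq_some_getLast hc, Option.toList_some, List.map_cons,
    List.map_nil, List.append_assoc, this]
  exact List.perm_append_comm.append_left c

theorem IsSymmetricChain.append_insert_of_getLast? {s : Finset α} {c : List (Finset α)}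
    {a : α} {x : Finset α} (hc : IsSymmetricChain s c) (ha : a ∉ s) (hx : c.getLast? = some x) :
    IsSymmetricChain (insert a s) (c ++ [insert a x]) := by
  obtain ⟨hne, hsub, hchain, h, hlen, hcard⟩ := hc
  have hxc : x ∈ c := List.mem_of_getLast? hx
  refine ⟨by simp, ?_, ?_, h, ?_, ?_⟩
  · simp only [List.mem_append, List.mem_singleton]
    rintro A (hA | rfl)
    · exact (hsub A hA).trans (subset_insert a s)
    · exact insert_subset_insert a (hsub x hxc)
  · refine List.isChain_append.2 ⟨hchain, List.isChain_singleton _, ?_⟩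
    simp [hx, subset_insert]
  · rw [card_insert_of_notMem ha, List.length_append, List.length_singleton]
    omega
  · have hxcard : #x = h + c.length - 1 := by
      have := congrArg List.getLast? hcard
      rw [List.getLast?_map, hx, List.getLast?_range', if_neg (by simpa using hne)] at this
      simpa using this
    rw [List.map_append, hcard, List.length_append, List.length_singleton, List.range'_concat,
      List.map_singleton, card_insert_of_notMem fun h' => ha (hsub x hxc h'), hxcard]
    have := List.length_pos_iff.2 hne
    congr 2
    omega

theorem IsSymmetricChain.map_insert_dropLast {s : Finset α} {c : List (Finset α)} {a : α}
    (hc : IsSymmetricChain s c) (ha : a ∉ s) (hd : c.dropLast ≠ []) :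
    IsSymmetricChain (insert a s) (c.dropLast.map (insert a)) := by
  obtain ⟨hne, hsub, hchain, h, hlen, hcard⟩ := hc
  have hmem : ∀ A ∈ c.dropLast, A ∈ c := fun A hA => List.dropLast_subset c hA
  have hlen2 : 2 ≤ c.length := by
    have := List.length_pos_iff.2 hd
    rw [List.length_dropLast] at this
    omega
  refine ⟨mt List.map_eq_nil_iff.1 hd, ?_, ?_, h + 1, ?_, ?_⟩
  · simp only [List.mem_map]
    rintro _ ⟨A, hA, rfl⟩
    exact insert_subset_insert a (hsub A (hmem A hA))
  · exact (List.isChain_map _).2 (hchain.dropLast.imp fun A B hAB => insert_subset_insert a hAB)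
  · rw [card_insert_of_notMem ha, List.length_map, List.length_dropLast]
    omega
  · have : (c.dropLast.map (insert a)).map card = (c.dropLast.map card).map (1 + ·) := by
      simp only [List.map_map]
      refine List.map_congr_left fun A hA => ?_
      simp [card_insert_of_notMem fun h' => ha (hsub A (hmem A hA) h'), add_comm]
    rw [this, List.map_dropLast, hcard, List.length_map, List.length_dropLast]
    obtain ⟨L, hL⟩ : ∃ L, c.length = L + 1 := ⟨c.length - 1, by omega⟩
    rw [hL, List.range'_concat, List.dropLast_concat, List.map_add_range', Nat.add_sub_cancel,
      add_comm 1 h]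

theorem IsSymmetricChain.of_mem_splitChain {s : Finset α} {c d : List (Finset α)} {a : α}
    (hc : IsSymmetricChain s c) (ha : a ∉ s) (hd : d ∈ splitChain a c) :
    IsSymmetricChain (insert a s) d := by
  simp only [splitChain, List.mem_filter, List.mem_cons, List.not_mem_nil, or_false,
    decide_eq_true_eq] at hd
  obtain ⟨rfl | rfl, hne⟩ := hd
  · rw [List.getLast?_eq_some_getLast hc.1]
    exact hc.append_insert_of_getLast? ha (List.getLast?_eq_some_getLast hc.1)
  · exact hc.map_insert_dropLast ha (mt List.map_eq_nil_iff.2 hne)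

theorem nodup_append_map_insert {L : List (Finset α)} {a : α} (hL : L.Nodup)
    (ha : ∀ A ∈ L, a ∉ A) : (L ++ L.map (insert a)).Nodup := by
  refine List.nodup_append.2 ⟨hL, hL.map_on fun A hA B hB h => ?_, ?_⟩
  · rw [← erase_insert (ha A hA), h, erase_insert (ha B hB)]
  · rintro _ hA _ hB rfl
    obtain ⟨B, -, rfl⟩ := List.mem_map.1 hB
    exact ha _ hA (mem_insert_self a B)

theorem flatten_flatMap_splitChain_perm (a : α) (chains : List (List (Finset α))) :
    (chains.flatMap (splitChain a)).flatten.Perm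
      (chains.flatten ++ chains.flatten.map (insert a)) := by
  have : (chains.flatMap (splitChain a)).flatten =
      chains.flatMap fun c => (splitChain a c).flatten := by
    simp only [List.flatMap_def, List.flatten_flatten, List.map_map]
    rfl
  rw [this]
  refine (List.Perm.flatMap_left _ fun c _ => flatten_splitChain_perm a c).trans ?_
  refine (List.flatMap_append_perm _ _ _).symm.trans ?_
  simp [List.map_flatten, List.flatMap_def]

theorem exists_symmetricChain_decomposition (s : Finset α) :
    ∃ chains : List (List (Finset α)), (∀ c ∈ chains, IsSymmetricChain s c) ∧
      chains.flatten.Nodup ∧ ∀ A ⊆ s, A ∈ chains.flatten := by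
  induction s using Finset.induction_on with
  | empty =>
    refine ⟨[[∅]], ?_, by simp, by simp⟩
    simp only [List.mem_singleton, forall_eq]
    exact ⟨by simp, by simp, by simp, 0, by simp, by simp⟩
  | @insert a s ha ih =>
    obtain ⟨chains, hchains, hnodup, hcover⟩ := ih
    have hperm := flatten_flatMap_splitChain_perm a chains
    refine ⟨chains.flatMap (splitChain a), ?_, hperm.nodup_iff.2 ?_, fun A hA => hperm.mem_iff.2 ?_⟩
    · simp only [List.mem_flatMap]
      rintro d ⟨c, hc, hd⟩
      exact (hchains c hc).of_mem_splitChain ha hd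
    · refine nodup_append_map_insert hnodup fun A hA haA => ha ?_
      obtain ⟨c, hc, hAc⟩ := List.mem_flatten.1 hA
      exact (hchains c hc).2.1 A hAc haA
    · rw [List.mem_append, List.mem_map]
      by_cases haA : a ∈ A
      · refine .inr ⟨A.erase a, hcover _ fun x hx => ?_, insert_erase haA⟩
        exact (mem_insert.1 (hA (mem_of_mem_erase hx))).resolve_left (ne_of_mem_erase hx)
      · exact .inl (hcover A fun x hx => (mem_insert.1 (hA hx)).resolve_left fun h => haA (h ▸ hx))

end SymmetricChains

section Cover

variable {α : Type*} [DecidableEq α]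

theorem length_le_two_pow_card_of_nodup {s : Finset α} {L : List (Finset α)} (hL : L.Nodup)
    (hs : ∀ A ∈ L, A ⊆ s) : L.length ≤ 2 ^ #s := by
  rw [← List.toFinset_card_of_nodup hL, ← card_powerset]
  exact card_le_card fun A hA => mem_powerset.2 (hs A (List.mem_toFinset.1 hA))

theorem length_le_choose_half {s : Finset α} {chains : List (List (Finset α))}
    (hchains : ∀ c ∈ chains, IsSymmetricChain s c) (hnodup : chains.flatten.Nodup) :
    chains.length ≤ (#s).choose (#s / 2) := by
  choose! mid hmid hcard using fun c hc => (hchains c hc).exists_card_eq_half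
  have hnd : (chains.map mid).Nodup :=
    List.pairwise_map.2 <| (List.nodup_flatten.1 hnodup).2.imp_of_mem
      fun hc hd hcd h => hcd (hmid _ hc) (h ▸ hmid _ hd)
  rw [← List.length_map (f := mid), ← List.toFinset_card_of_nodup hnd, ← card_powersetCard]
  refine card_le_card fun A hA => ?_
  obtain ⟨c, hc, rfl⟩ := List.mem_map.1 (List.mem_toFinset.1 hA)
  exact mem_powersetCard.2 ⟨(hchains c hc).2.1 _ (hmid c hc), hcard c hc⟩

theorem List.getElem_mem_take_drop {β : Type*} {l : List β} {d r i : ℕ} (hi : i < l.length)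
    (hd : d ≤ i) (hr : i < d + r) : l[i] ∈ (l.drop d).take r := by
  have : ((l.drop d).take r)[i - d]'(by simp; omega) = l[i] := by
    simp only [List.getElem_take, List.getElem_drop]
    congr 1
    omega
  exact this ▸ List.getElem_mem _

theorem List.exists_getElem_of_mem_take_drop {β : Type*} {l : List β} {d r : ℕ} {x : β}
    (hx : x ∈ (l.drop d).take r) : ∃ t < r, ∃ h : d + t < l.length, l[d + t] = x := by
  obtain ⟨t, ht, rfl⟩ := List.mem_iff_getElem.1 hx
  simp only [List.length_take, List.length_drop, lt_min_iff] at ht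
  exact ⟨t, ht.1, by omega, by simp⟩

/-- Lower sets `l[i]` and upper sets `insert a (s \ l[j])`; the upper window is shifted by `r - 1`
so that `i ≤ j` throughout a block, which makes it cross-disjoint. -/
def chainBlock (r : ℕ) (a : α) (s : Finset α) (l : List (Finset α)) (q : ℕ) :
    Finset (Finset α) × Finset (Finset α) :=
  (((l.drop (q * r)).take r).toFinset,
    (((l.drop (q * r + (r - 1))).take r).map fun B => insert a (s \ B)).toFinset)

/-- The first `r - 1` upper sets are not reached by any `chainBlock`; they get blocks of their own. -/
def chainBlocks (r : ℕ) (a : α) (s : Finset α) (l : List (Finset α)) :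
    List (Finset (Finset α) × Finset (Finset α)) :=
  (List.range ((l.length + r - 1) / r)).map (chainBlock r a s l) ++
    (l.take (r - 1)).map fun B => (∅, {insert a (s \ B)})

variable {r : ℕ} {a : α} {s : Finset α} {l : List (Finset α)}

theorem card_le_of_mem_chainBlocks (hr : 0 < r) {b : Finset (Finset α) × Finset (Finset α)}
    (hb : b ∈ chainBlocks r a s l) : #b.1 ≤ r ∧ #b.2 ≤ r := by
  simp only [chainBlocks, List.mem_append, List.mem_map, List.mem_range] at hb
  obtain ⟨q, -, rfl⟩ | ⟨B, -, rfl⟩ := hb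
  · constructor <;> refine (List.toFinset_card_le _).trans ?_ <;> simp
  · simp only [card_empty, card_singleton]
    omega

theorem crossDisjoint_of_mem_chainBlocks (hl : l.Pairwise (· ⊆ ·)) (ha : ∀ A ∈ l, a ∉ A)
    {b : Finset (Finset α) × Finset (Finset α)} (hb : b ∈ chainBlocks r a s l) :
    CrossDisjoint b.1 b.2 := by
  simp only [chainBlocks, List.mem_append, List.mem_map, List.mem_range] at hb
  obtain ⟨q, -, rfl⟩ | ⟨B, -, rfl⟩ := hb
  · intro S hS T hT
    obtain ⟨t, ht, hi, rfl⟩ := List.exists_getElem_of_mem_take_drop (List.mem_toFinset.1 hS)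
    obtain ⟨B, hB, rfl⟩ := List.mem_map.1 (List.mem_toFinset.1 hT)
    obtain ⟨u, -, hj, rfl⟩ := List.exists_getElem_of_mem_take_drop hB
    have hsub : l[q * r + t] ⊆ l[q * r + (r - 1) + u] := by
      rcases (show q * r + t ≤ q * r + (r - 1) + u by omega).lt_or_eq with hlt | heq
      · exact List.pairwise_iff_getElem.1 hl _ _ hi hj hlt
      · simp only [heq, subset_refl]
    exact disjoint_insert_right.2 ⟨ha _ (List.getElem_mem _), disjoint_sdiff.mono_left hsub⟩
  · simp [CrossDisjoint]

theorem chainBlock_mem_chainBlocks (hr : 0 < r) {q : ℕ} (hq : q * r < l.length) :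
    chainBlock r a s l q ∈ chainBlocks r a s l := by
  refine List.mem_append_left _ (List.mem_map_of_mem (List.mem_range.2 ?_))
  exact (Nat.le_div_iff_mul_le hr).2 (by rw [Nat.succ_mul]; omega)

theorem exists_mem_chainBlocks (hr : 0 < r) {B : Finset α} (hB : B ∈ l) :
    (∃ b ∈ chainBlocks r a s l, B ∈ b.1) ∧ ∃ b ∈ chainBlocks r a s l, insert a (s \ B) ∈ b.2 := by
  obtain ⟨i, hi, rfl⟩ := List.mem_iff_getElem.1 hB
  have hdiv : i / r * r ≤ i := Nat.div_mul_le_self i r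
  refine ⟨⟨_, chainBlock_mem_chainBlocks hr (hdiv.trans_lt hi), List.mem_toFinset.2
    (List.getElem_mem_take_drop hi hdiv (Nat.lt_div_mul_add hr))⟩, ?_⟩
  rcases lt_or_ge i (r - 1) with hir | hir
  · refine ⟨_, List.mem_append_right _ (List.mem_map_of_mem ?_), mem_singleton_self _⟩
    simpa using List.getElem_mem_take_drop (d := 0) hi (Nat.zero_le i) (by omega)
  · have hdiv' := Nat.div_mul_le_self (i - (r - 1)) r
    have hlt := Nat.lt_div_mul_add (a := i - (r - 1)) hr
    refine ⟨_, chainBlock_mem_chainBlocks hr (q := (i - (r - 1)) / r) (by omega), ?_⟩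
    exact List.mem_toFinset.2 (List.mem_map_of_mem
      (List.getElem_mem_take_drop hi (by omega) (by omega)))

theorem mul_length_chainBlocks_le (r : ℕ) (a : α) (s : Finset α) (l : List (Finset α)) :
    r * (chainBlocks r a s l).length ≤ l.length + r ^ 2 := by
  simp only [chainBlocks, List.length_append, List.length_map, List.length_range,
    List.length_take]
  have h₁ := Nat.div_mul_le_self (l.length + r - 1) r
  have h₂ : min (r - 1) l.length ≤ r - 1 := min_le_left _ _
  generalize (l.length + r - 1) / r = q at h₁ ⊢
  generalize min (r - 1) l.length = m at h₂ ⊢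
  cases r with
  | zero => simp
  | succ r =>
    simp only [Nat.add_sub_cancel] at h₂
    rw [show l.length + (r + 1) - 1 = l.length + r by omega] at h₁
    nlinarith

theorem mul_length_flatMap_chainBlocks_le (r : ℕ) (a : α) (s : Finset α)
    (chains : List (List (Finset α))) :
    r * (chains.flatMap (chainBlocks r a s)).length ≤
      chains.flatten.length + r ^ 2 * chains.length := by
  induction chains with
  | nil => simp
  | cons l chains ih =>
    simp only [List.flatMap_cons, List.flatten_cons, List.length_append, List.length_cons]
    nlinarith [mul_length_chainBlocks_le r a s l]

theorem exists_crossDisjoint_cover (s : Finset α) (ha : a ∉ s) (hr : 0 < r) :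
    ∃ blocks : List (Finset (Finset α) × Finset (Finset α)),
      (∀ b ∈ blocks, #b.1 ≤ r ∧ #b.2 ≤ r ∧ CrossDisjoint b.1 b.2) ∧
      (∀ A ⊆ insert a s, ∃ b ∈ blocks, A ∈ b.1 ∨ A ∈ b.2) ∧
      r * blocks.length ≤ 2 ^ #s + r ^ 2 * (#s).choose (#s / 2) := by
  obtain ⟨chains, hchains, hnodup, hcover⟩ := exists_symmetricChain_decomposition s
  have hsub : ∀ A ∈ chains.flatten, A ⊆ s := fun A hA => by
    obtain ⟨l, hl, hAl⟩ := List.mem_flatten.1 hA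
    exact (hchains l hl).2.1 A hAl
  refine ⟨chains.flatMap (chainBlocks r a s), ?_, ?_, ?_⟩
  · simp only [List.mem_flatMap]
    rintro b ⟨l, hl, hb⟩
    have hl' : l.Pairwise (· ⊆ ·) := List.isChain_iff_pairwise.1 (hchains l hl).2.2.1
    obtain ⟨hC, hD⟩ := card_le_of_mem_chainBlocks hr hb
    exact ⟨hC, hD, crossDisjoint_of_mem_chainBlocks hl'
      (fun A hA haA => ha (hsub A (List.mem_flatten.2 ⟨l, hl, hA⟩) haA)) hb⟩
  · intro A hA
    by_cases haA : a ∈ A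
    · have hAs : A.erase a ⊆ s := subset_insert_iff.1 hA
      obtain ⟨l, hl, hBl⟩ := List.mem_flatten.1 (hcover _ (sdiff_subset : s \ A.erase a ⊆ s))
      obtain ⟨b, hb, hAb⟩ := (exists_mem_chainBlocks (a := a) hr hBl).2
      rw [Finset.sdiff_sdiff_eq_self hAs, insert_erase haA] at hAb
      exact ⟨b, List.mem_flatMap.2 ⟨l, hl, hb⟩, .inr hAb⟩
    · obtain ⟨l, hl, hAl⟩ := List.mem_flatten.1 (hcover A ((subset_insert_iff_of_notMem haA).1 hA))
      obtain ⟨b, hb, hAb⟩ := (exists_mem_chainBlocks (a := a) (s := s) hr hAl).1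
      exact ⟨b, List.mem_flatMap.2 ⟨l, hl, hb⟩, .inl hAb⟩
  · exact (mul_length_flatMap_chainBlocks_le r a s chains).trans
      (add_le_add (length_le_two_pow_card_of_nodup hnodup hsub)
        (Nat.mul_le_mul_left _ (length_le_choose_half hchains hnodup)))

end Cover

theorem Nat.centralBinom_sq_mul_le (q : ℕ) : centralBinom q ^ 2 * (3 * q + 1) ≤ 16 ^ q := by
  induction q with
  | zero => simp
  | succ q ih =>
    have hpos : 0 < (q + 1) ^ 2 * (3 * q + 1) := by positivity
    refine Nat.le_of_mul_le_mul_left ?_ hpos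
    calc (q + 1) ^ 2 * (3 * q + 1) * (centralBinom (q + 1) ^ 2 * (3 * (q + 1) + 1))
        = ((q + 1) * centralBinom (q + 1)) ^ 2 * ((3 * q + 1) * (3 * q + 4)) := by ring
      _ = centralBinom q ^ 2 * (3 * q + 1) * (4 * (2 * q + 1) ^ 2 * (3 * q + 4)) := by
        rw [succ_mul_centralBinom_succ]; ring
      _ ≤ 16 ^ q * (16 * ((q + 1) ^ 2 * (3 * q + 1))) :=
        Nat.mul_le_mul ih (by nlinarith)
      _ = (q + 1) ^ 2 * (3 * q + 1) * 16 ^ (q + 1) := by ring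

theorem Nat.choose_half_sq_mul_le (m : ℕ) : m.choose (m / 2) ^ 2 * (m + 1) ≤ 4 ^ m := by
  obtain ⟨q, rfl | rfl⟩ := m.even_or_odd'
  · rw [Nat.mul_div_cancel_left q two_pos, ← centralBinom_eq_two_mul_choose, pow_mul]
    calc centralBinom q ^ 2 * (2 * q + 1) ≤ centralBinom q ^ 2 * (3 * q + 1) := by gcongr; omega
      _ ≤ 16 ^ q := centralBinom_sq_mul_le q
  · have hhalf : (2 * q + 1) / 2 = q := by omega
    have hdouble : 2 * (2 * q + 1).choose q = centralBinom (q + 1) := by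
      rw [centralBinom_eq_two_mul_choose, show 2 * (q + 1) = 2 * q + 1 + 1 by ring,
        choose_succ_succ, choose_symm_half]
      ring
    refine Nat.le_of_mul_le_mul_left ?_ (by norm_num : 0 < 4)
    calc 4 * ((2 * q + 1).choose ((2 * q + 1) / 2) ^ 2 * (2 * q + 1 + 1))
        = centralBinom (q + 1) ^ 2 * (2 * (q + 1)) := by rw [hhalf, ← hdouble]; ring
      _ ≤ centralBinom (q + 1) ^ 2 * (3 * (q + 1) + 1) := by gcongr; omega
      _ ≤ 16 ^ (q + 1) := centralBinom_sq_mul_le (q + 1)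
      _ = 4 * 4 ^ (2 * q + 1) := by rw [pow_succ, pow_succ, pow_mul]; norm_num; ring

theorem cast_le_of_mul_le_two_pow_add_choose {r m t : ℕ} (hr : 0 < r)
    (h : r * t ≤ 2 ^ m + r ^ 2 * m.choose (m / 2)) :
    (t : ℝ) ≤ 2 ^ (m + 1) / (2 * r) * (1 + r ^ 2 / √(m + 1)) := by
  have hsqrt : 0 < √((m : ℝ) + 1) := by positivity
  have hchoose : (m.choose (m / 2) : ℝ) ≤ 2 ^ m / √(m + 1) := by
    rw [le_div_iff₀ hsqrt]
    refine (pow_le_pow_iff_left₀ (by positivity) (by positivity) two_ne_zero).1 ?_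
    rw [mul_pow, Real.sq_sqrt (by positivity), ← pow_mul, mul_comm m 2, pow_mul]
    exact_mod_cast (Nat.choose_half_sq_mul_le m).trans_eq (by norm_num)
  have hr' : (0 : ℝ) < r := by exact_mod_cast hr
  have h' : (r : ℝ) * t ≤ 2 ^ m + r ^ 2 * m.choose (m / 2) := by exact_mod_cast h
  rw [show (2 : ℝ) ^ (m + 1) / (2 * r) * (1 + r ^ 2 / √(m + 1)) =
      (2 ^ m + r ^ 2 * (2 ^ m / √(m + 1))) / r by field_simp; ring, le_div_iff₀ hr']
  nlinarith

/-- For every fixed `k ≥ 2` there are a constant `C > 0` and a threshold `N` such that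
for all `n ≥ N` and every connected simple graph `G` with exactly `k` edges, the power
set of `[n]` can be partitioned into at most `(2 ^ n / (2 (k - 1))) (1 + C / √n)`
`G`-free parts, i.e. `f(n, G) ≤ (2 ^ n / (2 (k - 1))) (1 + O(1 / √n))`. -/
theorem f_G_upper (k : ℕ) (hk : 2 ≤ k) :
    ∃ C : ℝ, 0 < C ∧ ∃ N : ℕ, ∀ n : ℕ, N ≤ n →
      ∀ (V : Type) [Fintype V] (G : SimpleGraph V),
        G.Connected → G.edgeSet.ncard = k →
        ∃ (t : ℕ) (c : Finset (Fin n) → Fin t),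
          (∀ i : Fin t, GFree G {A | c A = i}) ∧
          (t : ℝ) ≤ 2 ^ n / (2 * ((k : ℝ) - 1)) * (1 + C / Real.sqrt n) := by
  obtain ⟨r, rfl⟩ : ∃ r, k = r + 1 := ⟨k - 1, by omega⟩
  have hr : 0 < r := by omega
  refine ⟨(r : ℝ) ^ 2, by positivity, 1, fun n hn V _ G hG hcard => ?_⟩
  obtain ⟨m, rfl⟩ : ∃ m, n = m + 1 := ⟨n - 1, by omega⟩
  obtain ⟨blocks, hblocks, hcover, hcount⟩ :=
    exists_crossDisjoint_cover (univ.erase (Fin.last m)) (notMem_erase _ _) hr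
  have hindex : ∀ A, ∃ i : Fin blocks.length, A ∈ blocks[i].1 ∨ A ∈ blocks[i].2 := fun A => by
    obtain ⟨b, hb, hA⟩ := hcover A (by simp)
    obtain ⟨i, rfl⟩ := List.get_of_mem hb
    exact ⟨i, hA⟩
  choose c hc using hindex
  refine ⟨blocks.length, c, fun i => ?_, ?_⟩
  · obtain ⟨hC, hD, hCD⟩ := hblocks _ (List.getElem_mem i.2)
    exact gFree_of_subset_union hG (fun A (hA : c A = i) => hA ▸ hc A) (by omega) (by omega) hCD
  · rw [card_erase_of_mem (mem_univ _), card_univ, Fintype.card_fin, Nat.add_sub_cancel] at hcount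
    convert cast_le_of_mul_le_two_pow_add_choose hr hcount using 3 <;> push_cast <;> ring
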